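/- arXiv:math/0601599 — 2 statements merged into one kernel-verified Lean document; each statement's English description precedes it below -/
import Mathlib

section
/- Let (M, g) be a Riemannian manifold whose curvature operator is positive semidefinite (in particular, positive). Then for any smooth function f, the pointwise inequality R_{ijkl} R_{ik} f_j f_l ≥ 0 holds at every point of M, where f_j = ∇_j f, R_{ijkl} is the Riemann tensor and R_{ik} the Ricci tensor. -/
/-!
Testing positivity of the curvature operator on decomposable 2-forms `u ∧ v` gives
`R(u, v, u, v) ≥ 0`. Tracing over `u = eᵢ` shows that `Ric` is positive semidefinite, hence
`Ric = ∑ₚ cₚ ⊗ cₚ`, and then `R_{ijkl} R_{ik} f_j f_l = ∑ₚ R(cₚ, ∇f, cₚ, ∇f) ≥ 0`.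
-/

open MeasureTheory Real

noncomputable section

/-- Abstract component presentation of a Riemannian manifold relative to an orthonormal frame: the Riemann tensor `Rm = R_{ijkl}`, the Ricci tensor `Ric = R_{jk}` and covariant derivative operators `Dk` on tensors of rank `k`, together with the standard curvature symmetries, the Bianchi identities and the Ricci commutation formulas; repeated indices are summed -/
structure RiemannianStructure (n : ℕ) where
  /-- the underlying manifold -/
  M : Type
  /-- the topology of `M` -/
  [topM : TopologicalSpace M]
  /-- the components `R_{ijkl}` of the Riemann curvature tensor in an orthonormal frame -/
  Rm : M → Fin n → Fin n → Fin n → Fin n → ℝ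
  /-- the components `R_{jk}` of the Ricci tensor -/
  Ric : M → Fin n → Fin n → ℝ
  /-- the covariant derivative of a scalar: `(D0 u) x i = ∇_i u (x)` -/
  D0 : (M → ℝ) → M → Fin n → ℝ
  /-- the covariant derivative of a 1-tensor: `(D1 ω) x i j = ∇_i ω_j (x)` -/
  D1 : (M → Fin n → ℝ) → M → Fin n → Fin n → ℝ
  /-- the covariant derivative of a 2-tensor: `(D2 T) x i j k = ∇_i T_{jk} (x)` -/
  D2 : (M → Fin n → Fin n → ℝ) → M → Fin n → Fin n → Fin n → ℝ
  /-- the covariant derivative of a 3-tensor -/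
  D3 : (M → Fin n → Fin n → Fin n → ℝ) → M → Fin n → Fin n → Fin n → Fin n → ℝ
  /-- the covariant derivative of a 4-tensor -/
  D4 : (M → Fin n → Fin n → Fin n → Fin n → ℝ) →
    M → Fin n → Fin n → Fin n → Fin n → Fin n → ℝ
  /-- antisymmetry of `R_{ijkl}` in the first index pair -/
  Rm_antisymm₁ : ∀ (x : M) (i j k l : Fin n), Rm x j i k l = - Rm x i j k l
  /-- antisymmetry of `R_{ijkl}` in the second index pair -/
  Rm_antisymm₂ : ∀ (x : M) (i j k l : Fin n), Rm x i j l k = - Rm x i j k l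
  /-- symmetry of `R_{ijkl}` in the two index pairs -/
  Rm_pairSymm : ∀ (x : M) (i j k l : Fin n), Rm x k l i j = Rm x i j k l
  /-- first Bianchi identity -/
  Rm_bianchi₁ : ∀ (x : M) (i j k l : Fin n), Rm x i j k l + Rm x j k i l + Rm x k i j l = 0
  /-- second Bianchi identity `∇_m R_{ijkl} + ∇_i R_{jmkl} + ∇_j R_{mikl} = 0` -/
  Rm_bianchi₂ : ∀ (x : M) (i j k l m : Fin n),
    D4 Rm x m i j k l + D4 Rm x i j m k l + D4 Rm x j m i k l = 0
  /-- the Ricci tensor is the trace of the Riemann tensor: `R_{jl} = R_{ijil}` -/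
  Ric_eq : ∀ (x : M) (j l : Fin n), Ric x j l = ∑ i, Rm x i j i l
  /-- covariant differentiation commutes with the trace: `∇_i R_{jl} = ∇_i R_{mjml}` -/
  D2Ric_eq : ∀ (x : M) (i j l : Fin n), D2 Ric x i j l = ∑ m, D4 Rm x i m j m l
  /-- Ricci identity (commutation of second covariant derivatives) on 1-tensors:
  `∇_i∇_j ω_k - ∇_j∇_i ω_k = -R_{ijmk} ω_m` -/
  comm₁ : ∀ (ω : M → Fin n → ℝ) (x : M) (i j k : Fin n),
    D2 (D1 ω) x i j k - D2 (D1 ω) x j i k = - ∑ m, Rm x i j m k * ω x m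
  /-- Ricci identity on 2-tensors:
  `∇_i∇_j T_{lk} - ∇_j∇_i T_{lk} = -R_{ijml} T_{mk} - R_{ijmk} T_{lm}` -/
  comm₂ : ∀ (T : M → Fin n → Fin n → ℝ) (x : M) (i j l k : Fin n),
    D3 (D2 T) x i j l k - D3 (D2 T) x j i l k
      = - (∑ m, Rm x i j m l * T x m k) - ∑ m, Rm x i j m k * T x l m

namespace RiemannianStructure

variable {n : ℕ} (S : RiemannianStructure n)

/-- The curvature operator (the quadratic form of `Rm` on 2-forms) is positive
semidefinite: `R_{ijkl} ω_{ij} ω_{kl} ≥ 0` for every 2-form `ω`. -/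
def NonnegCurvatureOperator : Prop :=
  ∀ (x : S.M) (ω : Fin n → Fin n → ℝ), (∀ i j, ω j i = - ω i j) →
    0 ≤ ∑ i, ∑ j, ∑ k, ∑ l, S.Rm x i j k l * ω i j * ω k l

/-- Nonnegative sectional curvature: `R(u,v,u,v) ≥ 0` for all vectors `u`, `v`. -/
def NonnegSectionalCurvature : Prop :=
  ∀ (x : S.M) (u v : Fin n → ℝ),
    0 ≤ ∑ i, ∑ j, ∑ k, ∑ l, S.Rm x i j k l * u i * v j * u k * v l

end RiemannianStructure

open Finset Matrix

section

variable {ι : Type*} [Fintype ι]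

theorem sum_mul_wedge_of_antisymm {F : ι → ι → ℝ} (hF : ∀ i j, F j i = -F i j) (u v : ι → ℝ) :
    ∑ i, ∑ j, F i j * (u i * v j - u j * v i) = 2 * ∑ i, ∑ j, F i j * u i * v j := by
  have hswap : ∑ i, ∑ j, F i j * u j * v i = -∑ i, ∑ j, F i j * u i * v j := by
    rw [sum_comm, ← sum_neg_distrib]
    refine sum_congr rfl fun i _ => ?_
    rw [← sum_neg_distrib]
    refine sum_congr rfl fun j _ => ?_
    rw [hF]; ring
  simp only [mul_sub, sum_sub_distrib, ← mul_assoc, hswap]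
  ring

theorem sum_mul_wedge_mul_wedge {R : ι → ι → ι → ι → ℝ}
    (hR₁ : ∀ i j k l, R j i k l = -R i j k l) (hR₂ : ∀ i j k l, R i j l k = -R i j k l)
    (u v : ι → ℝ) :
    ∑ i, ∑ j, ∑ k, ∑ l, R i j k l * (u i * v j - u j * v i) * (u k * v l - u l * v k)
      = 4 * ∑ i, ∑ j, ∑ k, ∑ l, R i j k l * u i * v j * u k * v l := by
  set G : ι → ι → ℝ := fun i j => ∑ k, ∑ l, R i j k l * u k * v l
  have hinner : ∀ i j, ∑ k, ∑ l, R i j k l * (u k * v l - u l * v k) = 2 * G i j :=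
    fun i j => sum_mul_wedge_of_antisymm (hR₂ i j) u v
  have hG : ∀ i j, G j i = -G i j := fun i j => by
    simp only [G, hR₁ i j, neg_mul, sum_neg_distrib]
  calc ∑ i, ∑ j, ∑ k, ∑ l, R i j k l * (u i * v j - u j * v i) * (u k * v l - u l * v k)
      = ∑ i, ∑ j, (∑ k, ∑ l, R i j k l * (u k * v l - u l * v k)) * (u i * v j - u j * v i) := by
        refine sum_congr rfl fun i _ => sum_congr rfl fun j _ => ?_
        simp only [sum_mul]
        exact sum_congr rfl fun _ _ => sum_congr rfl fun _ _ => by ring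
    _ = 2 * ∑ i, ∑ j, G i j * (u i * v j - u j * v i) := by
        simp only [hinner, mul_sum, mul_assoc]
    _ = 4 * ∑ i, ∑ j, ∑ k, ∑ l, R i j k l * u i * v j * u k * v l := by
        rw [sum_mul_wedge_of_antisymm hG, ← mul_assoc]
        norm_num only [G, sum_mul]
        congr 1
        exact sum_congr rfl fun _ _ => sum_congr rfl fun _ _ =>
          sum_congr rfl fun _ _ => sum_congr rfl fun _ _ => by ring

def ricciContraction (R : ι → ι → ι → ι → ℝ) : Matrix ι ι ℝ :=
  Matrix.of fun j l => ∑ i, R i j i l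

theorem sum_mul_single_mul_single [DecidableEq ι] (R : ι → ι → ι → ι → ℝ) (i : ι)
    (v : ι → ℝ) :
    ∑ a, ∑ b, ∑ c, ∑ d,
        R a b c d * (Pi.single i 1 : ι → ℝ) a * v b * (Pi.single i 1 : ι → ℝ) c * v d
      = ∑ b, ∑ d, R i b i d * v b * v d := by
  simp [Pi.single_apply]

theorem posSemidef_ricciContraction {R : ι → ι → ι → ι → ℝ}
    (hR : ∀ i j k l, R k l i j = R i j k l)
    (hsec : ∀ u v : ι → ℝ, 0 ≤ ∑ i, ∑ j, ∑ k, ∑ l, R i j k l * u i * v j * u k * v l) :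
    (ricciContraction R).PosSemidef := by
  classical
  have hHerm : (ricciContraction R).IsHermitian := by
    ext j l
    simp only [ricciContraction, conjTranspose_apply, of_apply, star_trivial]
    exact sum_congr rfl fun i _ => hR i j i l
  refine PosSemidef.of_dotProduct_mulVec_nonneg hHerm fun v => ?_
  have hquad : star v ⬝ᵥ ricciContraction R *ᵥ v
      = ∑ i, ∑ b, ∑ d, R i b i d * v b * v d := by
    simp only [dotProduct, mulVec, ricciContraction, of_apply, star_trivial, mul_sum, sum_mul]
    rw [sum_congr rfl fun j _ => sum_comm, sum_comm]
    exact sum_congr rfl fun _ _ => sum_congr rfl fun _ _ =>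
      sum_congr rfl fun _ _ => by ring
  rw [hquad]
  exact sum_nonneg fun i _ => sum_mul_single_mul_single R i v ▸ hsec _ v

theorem sum_mul_posSemidef_mul_nonneg {R : ι → ι → ι → ι → ℝ}
    (hsec : ∀ u v : ι → ℝ, 0 ≤ ∑ i, ∑ j, ∑ k, ∑ l, R i j k l * u i * v j * u k * v l)
    {A : Matrix ι ι ℝ} (hA : A.PosSemidef) (f : ι → ℝ) :
    0 ≤ ∑ i, ∑ j, ∑ k, ∑ l, R i j k l * A i k * f j * f l := by
  obtain ⟨m, c, rfl⟩ := posSemidef_iff_eq_sum_vecMulVec.mp hA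
  have hexpand :
      ∑ i, ∑ j, ∑ k, ∑ l, R i j k l * (∑ p, vecMulVec (c p) (star (c p))) i k * f j * f l
        = ∑ p, ∑ i, ∑ j, ∑ k, ∑ l, R i j k l * c p i * f j * c p k * f l := by
    simp only [Matrix.sum_apply, vecMulVec_apply, star_trivial, mul_sum, sum_mul]
    simp_rw [sum_comm (t := (univ : Finset (Fin m)))]
    exact sum_congr rfl fun _ _ => sum_congr rfl fun _ _ => sum_congr rfl
      fun _ _ => sum_congr rfl fun _ _ => sum_congr rfl fun _ _ => by ring
  rw [hexpand]
  exact sum_nonneg fun p _ => hsec (c p) f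

end

namespace RiemannianStructure

variable {n : ℕ}

theorem NonnegCurvatureOperator.nonnegSectionalCurvature {S : RiemannianStructure n}
    (hS : S.NonnegCurvatureOperator) : S.NonnegSectionalCurvature := fun x u v => by
  have hwedge := hS x (fun i j => u i * v j - u j * v i) fun i j => by ring
  rw [sum_mul_wedge_mul_wedge (S.Rm_antisymm₁ x) (S.Rm_antisymm₂ x)] at hwedge
  linarith

theorem of_ric_eq_ricciContraction (S : RiemannianStructure n) (x : S.M) :
    Matrix.of (S.Ric x) = ricciContraction (S.Rm x) :=
  Matrix.ext fun j l => S.Ric_eq x j l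

end RiemannianStructure

/-- On a Riemannian manifold with positive semidefinite
curvature operator, `R_{ijkl} R_{ik} f_j f_l ≥ 0` pointwise, for any function `f`. -/
theorem RmRicff_nonneg {n : ℕ} (S : RiemannianStructure n)
    (hpos : S.NonnegCurvatureOperator) (f : S.M → ℝ) (x : S.M) :
    0 ≤ ∑ i, ∑ j, ∑ k, ∑ l,
        S.Rm x i j k l * S.Ric x i k * S.D0 f x j * S.D0 f x l := by
  have hsec := hpos.nonnegSectionalCurvature x
  have hRic : (Matrix.of (S.Ric x)).PosSemidef := by
    rw [S.of_ric_eq_ricciContraction x]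
    exact posSemidef_ricciContraction (S.Rm_pairSymm x) hsec
  exact sum_mul_posSemidef_mul_nonneg hsec hRic (S.D0 f x)
end
end

section
/- (Berger) Let T be a symmetric 2-tensor on a Riemannian manifold (M, g) with nonnegative sectional curvature. Then at every point K := (∇_i∇_j T_{ik} − ∇_j∇_i T_{ik}) T_{jk} ≥ 0; more precisely, in an orthonormal frame diagonalizing T with eigenvalues λ_1, …, λ_n, one has K = Σ_{i<j} R_{ijij} (λ_i − λ_j)². -/
open MeasureTheory Real

noncomputable section

/-!
By the Ricci identity, `K = Rm(1, T²) - Rm(T, T)`, where `Rm(P, Q) = R_{ijkl} P_{ik} Q_{jl}` is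
bilinear. Writing `T = ∑ λ_α e_α ⊗ e_α` in an orthonormal eigenbasis (and `1 = ∑ e_α ⊗ e_α`),
both terms expand into the sectional terms `Rm(e_α ⊗ e_α, e_β ⊗ e_β) = R(e_α, e_β, e_α, e_β)`:
`K = ∑_{α,β} (λ_α² - λ_α λ_β) R(e_α, e_β, e_α, e_β)`, and symmetrizing in `α, β` gives
`K = ½ ∑_{α,β} (λ_α - λ_β)² R(e_α, e_β, e_α, e_β)`.
-/

section Berger

open Matrix

lemma Matrix.exists_orthogonalGroup_mul_diagonal_mul_transpose {ι : Type*} [Fintype ι]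
    [DecidableEq ι] {A : Matrix ι ι ℝ} (hA : A.IsHermitian) :
    ∃ U ∈ orthogonalGroup ι ℝ, ∃ d : ι → ℝ, A = U * diagonal d * Uᵀ := by
  refine ⟨hA.eigenvectorUnitary, hA.eigenvectorUnitary.2, hA.eigenvalues, ?_⟩
  conv_lhs => rw [hA.spectral_theorem]
  simp [star_eq_conjTranspose]

lemma Matrix.mul_diagonal_mul_transpose_eq_sum_vecMulVec {ι : Type*} [Fintype ι] [DecidableEq ι]
    (U : Matrix ι ι ℝ) (d : ι → ℝ) :
    U * diagonal d * Uᵀ = ∑ a, d a • vecMulVec (Uᵀ a) (Uᵀ a) := by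
  ext i j
  simp [mul_apply, sum_apply, vecMulVec_apply, diagonal_apply, mul_left_comm, mul_comm]

lemma Finset.sum_sum_sq_sub_mul_eq_sum_sum_sub_sq_div_two {ι : Type*} [Fintype ι] (S : ι → ι → ℝ)
    (hS : ∀ a b, S a b = S b a) (d : ι → ℝ) :
    ∑ a, ∑ b, d a ^ 2 * S a b - ∑ a, ∑ b, d a * d b * S a b
      = ∑ a, ∑ b, S a b * (d a - d b) ^ 2 / 2 := by
  have hswap : ∑ a, ∑ b, d b ^ 2 * S a b = ∑ a, ∑ b, d a ^ 2 * S a b := by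
    rw [Finset.sum_comm]
    simp only [hS]
  have hexpand : ∑ a, ∑ b, S a b * (d a - d b) ^ 2 / 2
      = (∑ a, ∑ b, d a ^ 2 * S a b + ∑ a, ∑ b, d b ^ 2 * S a b) / 2
        - ∑ a, ∑ b, d a * d b * S a b := by
    simp only [← Finset.sum_add_distrib, Finset.sum_div, ← Finset.sum_sub_distrib]
    exact Finset.sum_congr rfl fun a _ => Finset.sum_congr rfl fun b _ => by ring
  rw [hexpand, hswap]
  ring

lemma Finset.sum_sum_div_two_eq_sum_sum_lt {ι : Type*} [Fintype ι] [LinearOrder ι]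
    (f : ι → ι → ℝ) (hf : ∀ a b, f a b = f b a) (hdiag : ∀ a, f a a = 0) :
    ∑ a, ∑ b, f a b / 2 = ∑ a, ∑ b, if a < b then f a b else 0 := by
  have hsplit : ∀ a b, f a b = (if a < b then f a b else 0) + (if b < a then f b a else 0) := by
    intro a b
    rcases lt_trichotomy a b with h | rfl | h
    · simp [h, h.not_gt]
    · simp [hdiag]
    · simp [h, h.not_gt, hf a b]
  have hmirror : ∑ a, ∑ b, (if b < a then f b a else 0) = ∑ a, ∑ b, if a < b then f a b else 0 :=
    Finset.sum_comm
  conv_lhs => enter [2, a, 2, b]; rw [hsplit a b]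
  simp only [add_div, Finset.sum_add_distrib, ← Finset.sum_div]
  rw [hmirror]
  ring

variable {ι : Type*} [Fintype ι] (R : ι → ι → ι → ι → ℝ)

def curvatureContraction : Matrix ι ι ℝ →ₗ[ℝ] Matrix ι ι ℝ →ₗ[ℝ] ℝ :=
  LinearMap.mk₂ ℝ (fun P Q => ∑ i, ∑ j, ∑ k, ∑ l, R i j k l * P i k * Q j l)
    (fun _ _ _ => by simp only [Matrix.add_apply, mul_add, add_mul, Finset.sum_add_distrib])
    (fun _ _ _ => by
      simp only [Matrix.smul_apply, smul_eq_mul, Finset.mul_sum, mul_left_comm, mul_assoc])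
    (fun _ _ _ => by simp only [Matrix.add_apply, mul_add, Finset.sum_add_distrib])
    (fun _ _ _ => by
      simp only [Matrix.smul_apply, smul_eq_mul, Finset.mul_sum, mul_left_comm, mul_assoc])

lemma curvatureContraction_apply (P Q : Matrix ι ι ℝ) :
    curvatureContraction R P Q = ∑ i, ∑ j, ∑ k, ∑ l, R i j k l * P i k * Q j l := rfl

def sectionalForm (u v : ι → ℝ) : ℝ :=
  ∑ i, ∑ j, ∑ k, ∑ l, R i j k l * u i * v j * u k * v l

lemma curvatureContraction_vecMulVec (u v : ι → ℝ) :
    curvatureContraction R (vecMulVec u u) (vecMulVec v v) = sectionalForm R u v := by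
  simp only [curvatureContraction_apply, sectionalForm, vecMulVec_apply, mul_assoc, mul_left_comm]

lemma sectionalForm_comm (hR₁ : ∀ i j k l, R j i k l = -R i j k l)
    (hR₂ : ∀ i j k l, R i j l k = -R i j k l) (u v : ι → ℝ) :
    sectionalForm R u v = sectionalForm R v u := by
  unfold sectionalForm
  rw [Finset.sum_comm]
  refine Finset.sum_congr rfl fun j _ => Finset.sum_congr rfl fun i _ => ?_
  rw [Finset.sum_comm]
  refine Finset.sum_congr rfl fun l _ => Finset.sum_congr rfl fun k _ => ?_
  rw [hR₁, hR₂]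
  ring

lemma sectionalForm_one_apply [DecidableEq ι] (a b : ι) :
    sectionalForm R ((1 : Matrix ι ι ℝ) a) ((1 : Matrix ι ι ℝ) b) = R a b a b := by
  simp [sectionalForm, one_apply]

def bergerForm (A : Matrix ι ι ℝ) : ℝ :=
  ∑ i, ∑ j, ∑ k, (-(∑ m, R i j m i * A m k) - ∑ m, R i j m k * A i m) * A j k

lemma bergerForm_eq_curvatureContraction_sub [DecidableEq ι]
    (hR : ∀ i j k l, R i j l k = -R i j k l) (A : Matrix ι ι ℝ) :
    bergerForm R A = curvatureContraction R 1 (A * Aᵀ) - curvatureContraction R A A := by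
  have ricci : ∑ i, ∑ j, ∑ k, -(∑ m, R i j m i * A m k) * A j k =
      curvatureContraction R 1 (A * Aᵀ) := by
    simp only [curvatureContraction_apply, one_apply, mul_ite, ite_mul, mul_one, mul_zero,
      zero_mul, ← Finset.ite_sum_zero, Finset.sum_ite_eq, Finset.mem_univ, if_true, mul_apply,
      transpose_apply]
    refine Finset.sum_congr rfl fun i _ => Finset.sum_congr rfl fun j _ => ?_
    simp only [neg_mul, Finset.sum_mul, Finset.mul_sum, ← Finset.sum_neg_distrib]
    rw [Finset.sum_comm]
    refine Finset.sum_congr rfl fun m _ => Finset.sum_congr rfl fun k _ => ?_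
    rw [hR]
    ring
  have cross : ∑ i, ∑ j, ∑ k, (∑ m, R i j m k * A i m) * A j k = curvatureContraction R A A := by
    simp only [curvatureContraction_apply, Finset.sum_mul]
    exact Finset.sum_congr rfl fun i _ => Finset.sum_congr rfl fun j _ => Finset.sum_comm
  simp only [bergerForm, sub_mul, Finset.sum_sub_distrib, ricci, cross]

variable {R}

lemma bergerForm_eq_sum_sectionalForm [DecidableEq ι]
    (hR₁ : ∀ i j k l, R j i k l = -R i j k l) (hR₂ : ∀ i j k l, R i j l k = -R i j k l)
    {U : Matrix ι ι ℝ} (hU : U ∈ orthogonalGroup ι ℝ) (d : ι → ℝ) :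
    bergerForm R (U * diagonal d * Uᵀ)
      = ∑ a, ∑ b, sectionalForm R (Uᵀ a) (Uᵀ b) * (d a - d b) ^ 2 / 2 := by
  have hUUt : U * Uᵀ = 1 := (mem_orthogonalGroup_iff ι ℝ).mp hU
  have hUtU : Uᵀ * U = 1 := (mem_orthogonalGroup_iff' ι ℝ).mp hU
  have hone : (1 : Matrix ι ι ℝ) = U * diagonal (fun _ => 1) * Uᵀ := by
    rw [diagonal_one, Matrix.mul_one, hUUt]
  have hsq : (U * diagonal d * Uᵀ) * (U * diagonal d * Uᵀ)ᵀ
      = U * diagonal (fun a => d a ^ 2) * Uᵀ := by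
    simp only [transpose_mul, transpose_transpose, diagonal_transpose, Matrix.mul_assoc]
    rw [← Matrix.mul_assoc Uᵀ U, hUtU, Matrix.one_mul, ← Matrix.mul_assoc (diagonal d),
      diagonal_mul_diagonal]
    simp only [sq]
  have hsymm : ∀ a b, sectionalForm R (Uᵀ a) (Uᵀ b) = sectionalForm R (Uᵀ b) (Uᵀ a) :=
    fun a b => sectionalForm_comm R hR₁ hR₂ _ _
  rw [bergerForm_eq_curvatureContraction_sub R hR₂, hsq, hone,
    ← Finset.sum_sum_sq_sub_mul_eq_sum_sum_sub_sq_div_two _ hsymm]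
  simp only [mul_diagonal_mul_transpose_eq_sum_vecMulVec, map_sum, map_smul, LinearMap.sum_apply,
    LinearMap.smul_apply, curvatureContraction_vecMulVec, smul_eq_mul, one_mul, Finset.mul_sum]
  congr 1
  · exact Finset.sum_congr rfl fun a _ => Finset.sum_congr rfl fun b _ => by rw [hsymm]
  · exact Finset.sum_congr rfl fun a _ => Finset.sum_congr rfl fun b _ => by rw [hsymm, mul_assoc]

lemma bergerForm_nonneg [DecidableEq ι]
    (hR₁ : ∀ i j k l, R j i k l = -R i j k l) (hR₂ : ∀ i j k l, R i j l k = -R i j k l)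
    (hsec : ∀ u v, 0 ≤ sectionalForm R u v) {A : Matrix ι ι ℝ} (hA : A.IsHermitian) :
    0 ≤ bergerForm R A := by
  obtain ⟨U, hU, d, rfl⟩ := exists_orthogonalGroup_mul_diagonal_mul_transpose hA
  rw [bergerForm_eq_sum_sectionalForm hR₁ hR₂ hU]
  exact Finset.sum_nonneg fun a _ => Finset.sum_nonneg fun b _ =>
    div_nonneg (mul_nonneg (hsec _ _) (sq_nonneg _)) zero_le_two

lemma bergerForm_diagonal [DecidableEq ι] [LinearOrder ι]
    (hR₁ : ∀ i j k l, R j i k l = -R i j k l) (hR₂ : ∀ i j k l, R i j l k = -R i j k l)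
    (d : ι → ℝ) :
    bergerForm R (diagonal d) = ∑ a, ∑ b, if a < b then R a b a b * (d a - d b) ^ 2 else 0 := by
  have h := bergerForm_eq_sum_sectionalForm hR₁ hR₂ (one_mem (orthogonalGroup ι ℝ)) d
  simp only [Matrix.one_mul, transpose_one, Matrix.mul_one, sectionalForm_one_apply] at h
  rw [h]
  refine Finset.sum_sum_div_two_eq_sum_sum_lt _ (fun a b => ?_) (fun a => by simp)
  rw [hR₁, hR₂, neg_neg]
  ring

end Berger

theorem RiemannianStructure.sum_commutator_mul_eq_bergerForm {n : ℕ} (S : RiemannianStructure n)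
    (T : S.M → Fin n → Fin n → ℝ) (x : S.M) :
    ∑ i, ∑ j, ∑ k, (S.D3 (S.D2 T) x i j i k - S.D3 (S.D2 T) x j i i k) * T x j k
      = bergerForm (S.Rm x) (T x) := by
  simp only [S.comm₂, bergerForm]

/-- **Berger.** For a symmetric 2-tensor `T` on a Riemannian
manifold with nonnegative sectional curvature,
`K = (∇_i∇_j T_{ik} - ∇_j∇_i T_{ik}) T_{jk} ≥ 0` pointwise; more precisely, in an
orthonormal frame diagonalizing `T` with eigenvalues `λ_i`,
`K = ∑_{i<j} R_{ijij} (λ_i - λ_j)²`. -/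
theorem berger_inequality {n : ℕ} (S : RiemannianStructure n)
    (hsec : S.NonnegSectionalCurvature)
    (T : S.M → Fin n → Fin n → ℝ) (hT : ∀ (x : S.M) (i j : Fin n), T x i j = T x j i) :
    (∀ x : S.M,
      0 ≤ ∑ i, ∑ j, ∑ k,
          (S.D3 (S.D2 T) x i j i k - S.D3 (S.D2 T) x j i i k) * T x j k) ∧
    (∀ (x : S.M) (lam : Fin n → ℝ),
      (∀ i j, T x i j = if i = j then lam i else 0) →
      (∑ i, ∑ j, ∑ k, (S.D3 (S.D2 T) x i j i k - S.D3 (S.D2 T) x j i i k) * T x j k)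
        = ∑ i, ∑ j, if i < j then S.Rm x i j i j * (lam i - lam j) ^ 2 else 0) := by
  refine ⟨fun x => ?_, fun x lam hdiag => ?_⟩
  · rw [S.sum_commutator_mul_eq_bergerForm]
    exact bergerForm_nonneg (S.Rm_antisymm₁ x) (S.Rm_antisymm₂ x) (hsec x)
      (Matrix.IsHermitian.ext fun i j => by simp [hT x j i])
  · have hTx : T x = Matrix.diagonal lam := funext₂ fun i j => by rw [hdiag, Matrix.diagonal_apply]
    rw [S.sum_commutator_mul_eq_bergerForm, hTx]
    exact bergerForm_diagonal (S.Rm_antisymm₁ x) (S.Rm_antisymm₂ x) lam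
end
end
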